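/- arXiv:2012.10510 — 4 statements merged into one kernel-verified Lean document; each statement's English description precedes it below -/
import Mathlib

section
/- Let G₂ = ⟨g₁, g₂ ∣ g₂g₁ = g₁^{-1}g₂⟩. A map ψ : G₂ → G₂ is an automorphism of G₂ if and only if there exist a ∈ ℤ and ε, η ∈ {1, -1} such that ψ(g₁) = g₁^{ε} and ψ(g₂) = g₁^{a} · g₂^{η}. In particular, every automorphism of G₂ is of one of the four forms α_a (ψ(g₁)=g₁, ψ(g₂)=g₁^a g₂^{-1}), β_a (ψ(g₁)=g₁^{-1}, ψ(g₂)=g₁^a g₂), γ_a (ψ(g₁)=g₁, ψ(g₂)=g₁^a g₂), δ_a (ψ(g₁)=g₁^{-1}, ψ(g₂)=g₁^a g₂^{-1}) for some a ∈ ℤ. -/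
/-- The single relator `g₂ g₁ g₂⁻¹ g₁` presenting the Klein bottle group
`⟨g₁, g₂ ∣ g₂ g₁ = g₁⁻¹ g₂⟩`. -/
def kleinRels : Set (FreeGroup (Fin 2)) :=
  {FreeGroup.of 1 * FreeGroup.of 0 * (FreeGroup.of 1)⁻¹ * FreeGroup.of 0}

/-!
Every element of the Klein bottle group is `g₁ ^ m * g₂ ^ n`; the homomorphism `degree` to `ℤ`
reads off `n`, and `g₁` has infinite order since it maps to a rotation of infinite order in the
infinite dihedral group.

Since `g₁` is conjugate to its inverse, every homomorphism to `ℤ` kills it and is therefore a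
multiple of `degree`. So if `ψ g₂ = g₁ ^ a * g₂ ^ b`, then `degree ∘ ψ = b • degree`, whence
`ψ g₁ = g₁ ^ p` for some `p`. If `ψ` is surjective, hitting `g₂` gives `b = ±1` and then hitting
`g₁` gives `p = ±1`. Conversely, a map of the stated form is inverted by `g₁ ↦ g₁ ^ ε`,
`g₂ ↦ g₁ ^ (-(ε * a)) * g₂ ^ η`, which has the same form.
-/

abbrev KleinBottleGroup := PresentedGroup kleinRels

namespace KleinBottleGroup

def g₁ : KleinBottleGroup := PresentedGroup.of 0
def g₂ : KleinBottleGroup := PresentedGroup.of 1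

theorem g₂_mul_g₁_mul_g₂_inv : g₂ * g₁ * g₂⁻¹ = g₁⁻¹ :=
  mul_eq_one_iff_eq_inv.mp <| PresentedGroup.one_of_mem rfl

section Lift

variable {G : Type*} [Group G]

def lift (x y : G) (h : y * x * y⁻¹ = x⁻¹) : KleinBottleGroup →* G :=
  PresentedGroup.toGroup (f := ![x, y]) <| by
    rintro r rfl
    simpa [mul_assoc] using mul_eq_one_iff_eq_inv.mpr h

variable {x y : G} {h : y * x * y⁻¹ = x⁻¹}

@[simp] theorem lift_g₁ : lift x y h g₁ = x := PresentedGroup.toGroup.of _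
@[simp] theorem lift_g₂ : lift x y h g₂ = y := PresentedGroup.toGroup.of _

@[ext] theorem hom_ext {f f' : KleinBottleGroup →* G} (h₁ : f g₁ = f' g₁) (h₂ : f g₂ = f' g₂) :
    f = f' :=
  PresentedGroup.ext fun i => by fin_cases i <;> assumption

end Lift

theorem zpow_g₂_mul_zpow_g₁ {η : ℤ} (hη : η = 1 ∨ η = -1) (k : ℤ) :
    g₂ ^ η * g₁ ^ k = g₁ ^ (-k) * g₂ ^ η := by
  have hconj (k : ℤ) : g₂ * g₁ ^ k * g₂⁻¹ = g₁ ^ (-k) := by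
    rw [← conj_zpow, g₂_mul_g₁_mul_g₂_inv, inv_zpow']
  rcases hη with rfl | rfl
  · rw [zpow_one, ← hconj, inv_mul_cancel_right]
  · have h := hconj (-k)
    rw [neg_neg] at h
    rw [zpow_neg_one, ← h]
    group

theorem exists_zpow_mul_zpow (x : KleinBottleGroup) : ∃ m n : ℤ, g₁ ^ m * g₂ ^ n = x := by
  have closed_mul_left (i : Fin 2) {e : ℤ} (he : e = 1 ∨ e = -1) (m n : ℤ) :
      ∃ m' n' : ℤ, g₁ ^ m' * g₂ ^ n' = PresentedGroup.of i ^ e * (g₁ ^ m * g₂ ^ n) := by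
    fin_cases i
    · exact ⟨e + m, n, by rw [zpow_add, mul_assoc]; rfl⟩
    · refine ⟨-m, e + n, ?_⟩
      rw [zpow_add, ← mul_assoc, ← zpow_g₂_mul_zpow_g₁ he, mul_assoc]; rfl
  have hx : x ∈ Subgroup.closure (Set.range PresentedGroup.of) := by simp
  induction hx using Subgroup.closure_induction_left with
  | one => exact ⟨0, 0, by simp⟩
  | mul_left _ hs _ _ ih =>
    obtain ⟨⟨i, rfl⟩, ⟨m, n, rfl⟩⟩ := And.intro hs ih
    simpa using closed_mul_left i (.inl rfl) m n
  | inv_mul_cancel _ hs _ _ ih =>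
    obtain ⟨⟨i, rfl⟩, ⟨m, n, rfl⟩⟩ := And.intro hs ih
    simpa using closed_mul_left i (.inr rfl) m n

def degree : KleinBottleGroup →* Multiplicative ℤ :=
  lift 1 (Multiplicative.ofAdd 1) (by simp)

@[simp] theorem degree_g₁ : degree g₁ = 1 := lift_g₁
@[simp] theorem degree_g₂ : degree g₂ = Multiplicative.ofAdd 1 := lift_g₂

@[simp] theorem degree_zpow_mul_zpow (m n : ℤ) :
    degree (g₁ ^ m * g₂ ^ n) = Multiplicative.ofAdd n := by
  simp [← ofAdd_zsmul]

theorem map_g₁_eq_one {M : Type*} [CommGroup M] [IsMulTorsionFree M]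
    (f : KleinBottleGroup →* M) : f g₁ = 1 := by
  have h : f g₁ = (f g₁)⁻¹ := by simpa using congrArg f g₂_mul_g₁_mul_g₂_inv
  rwa [← mul_eq_one_iff_eq_inv, ← pow_two, pow_eq_one_iff_left two_ne_zero] at h

theorem eq_degree_zpow (f : KleinBottleGroup →* Multiplicative ℤ) :
    f = degree ^ (f g₂).toAdd := by
  ext
  · rw [map_g₁_eq_one, map_g₁_eq_one]
  · simp [MonoidHom.zpow_apply]

theorem not_isOfFinOrder_g₁ : ¬IsOfFinOrder g₁ := by
  let f : KleinBottleGroup →* DihedralGroup 0 := lift (.r 1) (.sr 0) (by simp)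
  have hf : f g₁ = .r 1 := lift_g₁
  intro h
  have := f.isOfFinOrder h
  rw [hf] at this
  exact orderOf_eq_zero_iff.mp DihedralGroup.orderOf_r_one this

theorem zpow_g₁_injective : Function.Injective (g₁ ^ · : ℤ → KleinBottleGroup) :=
  injective_zpow_iff_not_isOfFinOrder.mpr not_isOfFinOrder_g₁

theorem zpow_g₁_mul_zpow_g₂_conj {η : ℤ} (hη : η = 1 ∨ η = -1) (b k : ℤ) :
    (g₁ ^ b * g₂ ^ η) * g₁ ^ k * (g₁ ^ b * g₂ ^ η)⁻¹ = g₁ ^ (-k) := by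
  rw [mul_assoc (g₁ ^ b), zpow_g₂_mul_zpow_g₁ hη]
  group

theorem zpow_g₁_mul_zpow_g₂_zpow_self {η : ℤ} (hη : η = 1 ∨ η = -1) (b : ℤ) :
    (g₁ ^ b * g₂ ^ η) ^ η = g₁ ^ b * g₂ := by
  rcases hη with rfl | rfl
  · simp
  · have h := zpow_g₂_mul_zpow_g₁ (.inl rfl) (-b)
    rw [zpow_one, neg_neg] at h
    rw [zpow_neg_one, mul_inv_rev, zpow_neg_one, inv_inv, ← zpow_neg, h]

theorem comp_eq_id_of_forms {ψ φ : KleinBottleGroup →* KleinBottleGroup} {a ε η : ℤ}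
    (hεε : ε * ε = 1) (hη : η = 1 ∨ η = -1)
    (hψ₁ : ψ g₁ = g₁ ^ ε) (hψ₂ : ψ g₂ = g₁ ^ a * g₂ ^ η)
    (hφ₁ : φ g₁ = g₁ ^ ε) (hφ₂ : φ g₂ = g₁ ^ (-(ε * a)) * g₂ ^ η) :
    ψ.comp φ = MonoidHom.id _ := by
  ext
  · simp [hφ₁, hψ₁, ← zpow_mul, hεε]
  · simp only [MonoidHom.comp_apply, hφ₂, map_mul, map_zpow, hψ₁, hψ₂, ← zpow_mul,
      zpow_g₁_mul_zpow_g₂_zpow_self hη, MonoidHom.id_apply]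
    rw [show ε * -(ε * a) = -a by linear_combination (-a) * hεε, zpow_neg,
      inv_mul_cancel_left]

theorem bijective_of_forms {ψ : KleinBottleGroup →* KleinBottleGroup} {a ε η : ℤ}
    (hε : ε = 1 ∨ ε = -1) (hη : η = 1 ∨ η = -1)
    (hψ₁ : ψ g₁ = g₁ ^ ε) (hψ₂ : ψ g₂ = g₁ ^ a * g₂ ^ η) : Function.Bijective ψ := by
  have hεε : ε * ε = 1 := by rcases hε with rfl | rfl <;> rfl
  let φ := lift (g₁ ^ ε) (g₁ ^ (-(ε * a)) * g₂ ^ η) <| by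
    rw [zpow_g₁_mul_zpow_g₂_conj hη, zpow_neg]
  have hφψ : φ.comp ψ = MonoidHom.id _ := by
    refine comp_eq_id_of_forms hεε hη lift_g₁ lift_g₂ hψ₁ ?_
    rw [hψ₂, show -(ε * -(ε * a)) = a by linear_combination a * hεε]
  exact (MonoidHom.toMulEquiv ψ φ hφψ
    (comp_eq_id_of_forms hεε hη hψ₁ hψ₂ lift_g₁ lift_g₂)).bijective

theorem exists_forms_of_surjective {ψ : KleinBottleGroup →* KleinBottleGroup}
    (hψ : Function.Surjective ψ) :
    ∃ a ε η : ℤ, (ε = 1 ∨ ε = -1) ∧ (η = 1 ∨ η = -1) ∧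
      ψ g₁ = g₁ ^ ε ∧ ψ g₂ = g₁ ^ a * g₂ ^ η := by
  obtain ⟨p, q, hpq⟩ := exists_zpow_mul_zpow (ψ g₁)
  obtain ⟨a, b, hab⟩ := exists_zpow_mul_zpow (ψ g₂)
  have hdeg (x : KleinBottleGroup) : (degree (ψ x)).toAdd = b * (degree x).toAdd := by
    have hb : (degree (ψ g₂)).toAdd = b := by simp [← hab]
    rw [← MonoidHom.comp_apply, eq_degree_zpow (degree.comp ψ), MonoidHom.zpow_apply,
      MonoidHom.comp_apply, hb, toAdd_zpow, smul_eq_mul]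
  have hψ₁ : ψ g₁ = g₁ ^ p := by
    have hq : q = 0 := by simpa [← hpq] using hdeg g₁
    rw [← hpq, hq, zpow_zero, mul_one]
  have hb : b = 1 ∨ b = -1 := by
    obtain ⟨x, hx⟩ := hψ g₂
    exact Int.eq_one_or_neg_one_of_mul_eq_one (by simpa [hx] using (hdeg x).symm)
  have hp : p = 1 ∨ p = -1 := by
    obtain ⟨x, hx⟩ := hψ g₁
    obtain ⟨m, n, rfl⟩ := exists_zpow_mul_zpow x
    have hn : n = 0 := by
      have h := hdeg (g₁ ^ m * g₂ ^ n)
      rw [hx] at h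
      rcases hb with rfl | rfl <;> simpa using h.symm
    have hpm : p * m = 1 := zpow_g₁_injective (by simpa [hn, hψ₁, zpow_mul] using hx)
    exact Int.eq_one_or_neg_one_of_mul_eq_one hpm
  exact ⟨a, p, b, hp, hb, hψ₁, hab.symm⟩

end KleinBottleGroup

/-- In the Klein bottle group `G₂ = ⟨g₁, g₂ ∣ g₂ g₁ = g₁⁻¹ g₂⟩`, a group
homomorphism `ψ : G₂ →* G₂` is an automorphism (i.e. bijective) if and only if
there exist `a ∈ ℤ` and `ε, η ∈ {1, -1}` with `ψ g₁ = g₁^ε` and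
`ψ g₂ = g₁^a * g₂^η`.  In particular every automorphism of `G₂` is of one of
the four forms `α_a, β_a, γ_a, δ_a`. -/
theorem klein_aut_characterization
    (ψ : PresentedGroup kleinRels →* PresentedGroup kleinRels) :
    letI G₂ := PresentedGroup kleinRels
    letI g₁ : G₂ := PresentedGroup.of 0
    letI g₂ : G₂ := PresentedGroup.of 1
    Function.Bijective ψ ↔
      ∃ (a ε η : ℤ), (ε = 1 ∨ ε = -1) ∧ (η = 1 ∨ η = -1) ∧
        ψ g₁ = g₁ ^ ε ∧ ψ g₂ = g₁ ^ a * g₂ ^ η :=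
  ⟨fun h => KleinBottleGroup.exists_forms_of_surjective h.2,
    fun ⟨_, _, _, hε, hη, h₁, h₂⟩ => KleinBottleGroup.bijective_of_forms hε hη h₁ h₂⟩
end

section
/- Let G₂ = ⟨g₁, g₂ ∣ g₂g₁ = g₁^{-1}g₂⟩. An automorphism ψ ∈ Aut(G₂) is inner if and only if there exist a ∈ ℤ and ε ∈ {1, -1} such that ψ(g₁) = g₁^{ε} and ψ(g₂) = g₁^{2a} · g₂. -/
/-!
Let `x, y` generate a group `G` with `y x y⁻¹ = x⁻¹`. The automorphisms `φ` with `φ x = x ^ ε`,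
`ε = ±1`, and `φ y = x ^ (2a) * y` form a subgroup of `MulAut G` for any `x, y` whatsoever.
Conjugation by `x` (`ε = 1, a = 1`) and by `y` (`ε = -1, a = 0`) lie in it, so all inner
automorphisms do. Conversely such a `φ` agrees on the generators with conjugation by `x ^ a`
(if `ε = 1`) or by `x ^ a * y` (if `ε = -1`).
-/

open Subgroup

theorem MulEquiv.eq_of_eqOn_dense {G H : Type*} [Group G] [Group H] {s : Set G}
    (hs : closure s = ⊤) {φ χ : G ≃* H} (h : s.EqOn φ χ) : φ = χ :=
  MulEquiv.toMonoidHom_injective (MonoidHom.eq_of_eqOn_dense hs h)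

section KleinRelation

variable {G : Type*} [Group G]

def kleinAutForm (x y : G) : Subgroup (MulAut G) where
  carrier := {φ | ∃ a ε : ℤ, IsUnit ε ∧ φ x = x ^ ε ∧ φ y = x ^ (2 * a) * y}
  one_mem' := ⟨0, 1, isUnit_one, by simp, by simp⟩
  mul_mem' := by
    rintro φ χ ⟨a, ε, hε, hφx, hφy⟩ ⟨b, δ, hδ, hχx, hχy⟩
    refine ⟨ε * b + a, ε * δ, hε.mul hδ, ?_, ?_⟩
    · rw [MulAut.mul_apply, hχx, map_zpow, hφx, ← zpow_mul]
    · rw [MulAut.mul_apply, hχy, map_mul, map_zpow, hφx, hφy, ← mul_assoc, ← zpow_mul,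
        ← zpow_add, mul_left_comm, ← mul_add]
  inv_mem' := by
    rintro φ ⟨a, ε, hε, hφx, hφy⟩
    have hεε := Int.isUnit_mul_self hε
    refine ⟨-(ε * a), ε, hε, ?_, ?_⟩
    · rw [MulAut.inv_apply, MulEquiv.symm_apply_eq, map_zpow, hφx, ← zpow_mul, hεε, zpow_one]
    · rw [MulAut.inv_apply, MulEquiv.symm_apply_eq, map_mul, map_zpow, hφx, hφy, ← mul_assoc,
        ← zpow_mul, ← zpow_add, show ε * (2 * -(ε * a)) + 2 * a = 0 by
          linear_combination (-2 * a) * hεε, zpow_zero, one_mul]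

variable {x y : G}

theorem mem_kleinAutForm {φ : MulAut G} :
    φ ∈ kleinAutForm x y ↔ ∃ a ε : ℤ, IsUnit ε ∧ φ x = x ^ ε ∧ φ y = x ^ (2 * a) * y :=
  Iff.rfl

theorem mul_zpow_of_conj_eq_inv (hxy : y * x * y⁻¹ = x⁻¹) (n : ℤ) :
    y * x ^ n = x ^ (-n) * y := by
  rw [← mul_inv_eq_iff_eq_mul, ← MulAut.conj_apply, map_zpow, MulAut.conj_apply, hxy, inv_zpow,
    zpow_neg]

theorem conj_zpow_of_conj_eq_inv (hxy : y * x * y⁻¹ = x⁻¹) (a : ℤ) :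
    x ^ a * y * (x ^ a)⁻¹ = x ^ (2 * a) * y := by
  rw [mul_assoc, ← zpow_neg, mul_zpow_of_conj_eq_inv hxy, neg_neg, ← mul_assoc, ← zpow_add,
    two_mul]

theorem conj_mem_kleinAutForm_left (hxy : y * x * y⁻¹ = x⁻¹) :
    MulAut.conj x ∈ kleinAutForm x y :=
  ⟨1, 1, isUnit_one, by simp, by simpa using conj_zpow_of_conj_eq_inv hxy 1⟩

theorem conj_mem_kleinAutForm_right (hxy : y * x * y⁻¹ = x⁻¹) :
    MulAut.conj y ∈ kleinAutForm x y :=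
  ⟨0, -1, isUnit_one.neg, by simpa using hxy, by simp⟩

theorem range_conj_le_kleinAutForm (hgen : closure {x, y} = ⊤) (hxy : y * x * y⁻¹ = x⁻¹) :
    MulAut.conj.range ≤ kleinAutForm x y := by
  rw [MonoidHom.range_eq_map, ← hgen, MonoidHom.map_closure, Set.image_pair, closure_le,
    Set.insert_subset_iff, Set.singleton_subset_iff]
  exact ⟨conj_mem_kleinAutForm_left hxy, conj_mem_kleinAutForm_right hxy⟩

theorem kleinAutForm_le_range_conj (hgen : closure {x, y} = ⊤) (hxy : y * x * y⁻¹ = x⁻¹) :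
    kleinAutForm x y ≤ MulAut.conj.range := by
  rintro φ ⟨a, ε, hε, hφx, hφy⟩
  have mem_range_of_agree (h : G) (hx : h * x * h⁻¹ = φ x) (hy : h * y * h⁻¹ = φ y) :
      φ ∈ MulAut.conj.range :=
    ⟨h, MulEquiv.eq_of_eqOn_dense hgen (Set.forall_mem_insert.2 ⟨hx, forall_eq.2 hy⟩)⟩
  have hy : x ^ a * y * (x ^ a)⁻¹ = φ y := by rw [hφy, conj_zpow_of_conj_eq_inv hxy]
  obtain rfl | rfl := Int.isUnit_eq_one_or hε
  · exact mem_range_of_agree (x ^ a) (by rw [hφx]; group) hy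
  · refine mem_range_of_agree (x ^ a * y) ?_ ?_
    · calc x ^ a * y * x * (x ^ a * y)⁻¹ = x ^ a * (y * x * y⁻¹) * (x ^ a)⁻¹ := by group
        _ = φ x := by rw [hxy, hφx]; group
    · rw [← hy]; group

theorem range_conj_eq_kleinAutForm (hgen : closure {x, y} = ⊤) (hxy : y * x * y⁻¹ = x⁻¹) :
    MulAut.conj.range = kleinAutForm x y :=
  le_antisymm (range_conj_le_kleinAutForm hgen hxy) (kleinAutForm_le_range_conj hgen hxy)

end KleinRelation

theorem kleinRels_conj_eq_inv :
    (PresentedGroup.of 1 : PresentedGroup kleinRels) * .of 0 * (.of 1)⁻¹ = (.of 0)⁻¹ :=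
  mul_eq_one_iff_eq_inv.1 (PresentedGroup.one_of_mem rfl)

theorem kleinRels_closure_eq_top :
    closure ({.of 0, .of 1} : Set (PresentedGroup kleinRels)) = ⊤ := by
  rw [← PresentedGroup.closure_range_of kleinRels]
  congr 1
  ext
  simp [Fin.exists_fin_two, eq_comm]

/-- In the Klein bottle group `G₂ = ⟨g₁, g₂ ∣ g₂ g₁ = g₁⁻¹ g₂⟩`, an
automorphism `ψ` is inner if and only if there exist `a ∈ ℤ` and `ε ∈ {1, -1}`
such that `ψ g₁ = g₁^ε` and `ψ g₂ = g₁^(2a) * g₂`. -/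
theorem klein_inner_characterization
    (ψ : PresentedGroup kleinRels ≃* PresentedGroup kleinRels) :
    letI G₂ := PresentedGroup kleinRels
    letI g₁ : G₂ := PresentedGroup.of 0
    letI g₂ : G₂ := PresentedGroup.of 1
    (∃ h : G₂, ∀ x : G₂, ψ x = h * x * h⁻¹) ↔
      ∃ (a ε : ℤ), (ε = 1 ∨ ε = -1) ∧
        ψ g₁ = g₁ ^ ε ∧ ψ g₂ = g₁ ^ (2 * a) * g₂ := by
  have key := SetLike.ext_iff.1
    (range_conj_eq_kleinAutForm kleinRels_closure_eq_top kleinRels_conj_eq_inv) ψ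
  simp only [MonoidHom.mem_range, MulEquiv.ext_iff, MulAut.conj_apply, mem_kleinAutForm,
    Int.isUnit_iff] at key
  simpa only [eq_comm] using key
end

section
/- Let G be the group with presentation ⟨g₁, g₂, g₃ ∣ g₂g₁ = g₁^{-1}g₂, g₃g₁ = g₁^{-1}g₃, g₃g₂ = g₁g₂g₃⟩ (the group G₂ ⋊_{β₁} ℤ). Then the center of G equals the subgroup generated by g₂² and g₃². -/
/-!
Powers of `g₁` can always be moved to the left: conjugation by `g₂` or `g₃` inverts `g₁`, and
`g₃ g₂ ^ b g₃⁻¹ = (g₁ g₂) ^ b = g₁ ^ (b % 2) g₂ ^ b` because `(g₁ g₂) ^ 2 = g₂ ^ 2`. Hence every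
element is `g₁ ^ a g₂ ^ b g₃ ^ c`, and the same relations show that `g₂ ^ 2`, `g₃ ^ 2` commute with
all generators. Conversely, `g₁ ↦ r 2`, `g₂ ↦ sr 1`, `g₃ ↦ sr 0` defines a homomorphism onto the
infinite dihedral group, in which only `1` commutes with both `r 2` and `sr 0`. So a central
`g₁ ^ a g₂ ^ b g₃ ^ c` maps to `r (2 a) (sr 1) ^ b (sr 0) ^ c = 1`, which forces `a = 0` and `b`,
`c` even.
-/

/-- The relators `g₂g₁g₂⁻¹g₁`, `g₃g₁g₃⁻¹g₁`, `g₃g₂g₃⁻¹g₂⁻¹g₁⁻¹` presenting the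
group `⟨g₁, g₂, g₃ ∣ g₂g₁ = g₁⁻¹g₂, g₃g₁ = g₁⁻¹g₃, g₃g₂ = g₁g₂g₃⟩`. -/
def polyZRelsB1 : Set (FreeGroup (Fin 3)) :=
  {FreeGroup.of 1 * FreeGroup.of 0 * (FreeGroup.of 1)⁻¹ * FreeGroup.of 0,
   FreeGroup.of 2 * FreeGroup.of 0 * (FreeGroup.of 2)⁻¹ * FreeGroup.of 0,
   FreeGroup.of 2 * FreeGroup.of 1 * (FreeGroup.of 2)⁻¹ * (FreeGroup.of 1)⁻¹ * (FreeGroup.of 0)⁻¹}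

section Relations

variable {H : Type*} [Group H] {s x y z : H}

theorem SemiconjBy.inv_left_of_inv (h : SemiconjBy s x x⁻¹) : SemiconjBy s⁻¹ x x⁻¹ := by
  simpa using h.inv_symm_left.inv_right

theorem SemiconjBy.mul_zpow_eq_zpow_neg_mul (h : SemiconjBy s x x⁻¹) (a : ℤ) :
    s * x ^ a = x ^ (-a) * s := by
  simpa [inv_zpow'] using (h.zpow_right a).eq

theorem SemiconjBy.commute_sq_of_inv (h : SemiconjBy s x x⁻¹) : Commute (s ^ 2) x := by
  have h' := h.inv_right.mul_left h
  rwa [inv_inv, ← pow_two] at h'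

theorem SemiconjBy.mul_sq_of_inv (h : SemiconjBy y x x⁻¹) : (x * y) ^ 2 = y ^ 2 := by
  rw [pow_two, mul_assoc, ← mul_assoc y, h.eq, pow_two]
  group

theorem SemiconjBy.mul_zpow_eq_zpow_emod_mul_zpow (h : SemiconjBy y x x⁻¹) (b : ℤ) :
    (x * y) ^ b = x ^ (b % 2) * y ^ b := by
  have h_even (k : ℤ) : (x * y) ^ (2 * k) = y ^ (2 * k) := by
    rw [zpow_mul, zpow_mul, zpow_two, zpow_two, ← pow_two, ← pow_two, h.mul_sq_of_inv]
  obtain ⟨k, rfl | rfl⟩ := Int.even_or_odd' b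
  · rw [h_even, show 2 * k % 2 = 0 by omega, zpow_zero, one_mul]
  · rw [zpow_add_one, h_even, show (2 * k + 1) % 2 = 1 by omega, zpow_one, zpow_add_one,
      zpow_mul, zpow_two, ← pow_two, ← mul_assoc, (h.commute_sq_of_inv.zpow_left k).eq, mul_assoc]

theorem SemiconjBy.inv_left_of_mul (hx : SemiconjBy z x x⁻¹) (hy : SemiconjBy z y (x * y)) :
    SemiconjBy z⁻¹ y (x * y) := by
  simpa using hx.inv_symm_left.mul_right hy.inv_symm_left

theorem SemiconjBy.commute_sq_of_mul (hx : SemiconjBy z x x⁻¹) (hy : SemiconjBy z y (x * y)) :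
    Commute (z ^ 2) y := by
  have hxy : SemiconjBy z (x * y) y := by simpa using hx.mul_right hy
  rw [pow_two]
  exact hxy.mul_left hy

theorem SemiconjBy.commute_sq_right_of_mul (hyx : SemiconjBy y x x⁻¹)
    (hzy : SemiconjBy z y (x * y)) : Commute z (y ^ 2) := by
  have h := hzy.pow_right 2
  rwa [hyx.mul_sq_of_inv] at h

theorem exists_zpow_mul_zpow_mul_zpow_of_mem_closure (hyx : SemiconjBy y x x⁻¹)
    (hzx : SemiconjBy z x x⁻¹) (hzy : SemiconjBy z y (x * y)) {g : H}
    (hg : g ∈ Subgroup.closure {x, y, z}) : ∃ a b c : ℤ, g = x ^ a * y ^ b * z ^ c := by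
  have move_x {t : H} (htx : SemiconjBy t x x⁻¹) (a b c : ℤ) :
      t * (x ^ a * y ^ b * z ^ c) = x ^ (-a) * (t * y ^ b) * z ^ c := by
    rw [← mul_assoc, ← mul_assoc, htx.mul_zpow_eq_zpow_neg_mul]
    group
  have move_xy {t : H} (htx : SemiconjBy t x x⁻¹) (hty : SemiconjBy t y (x * y)) (a b c : ℤ) :
      t * (x ^ a * y ^ b * z ^ c) = x ^ (-a + b % 2) * y ^ b * (t * z ^ c) := by
    rw [move_x htx, (hty.zpow_right b).eq, hyx.mul_zpow_eq_zpow_emod_mul_zpow]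
    group
  induction hg using Subgroup.closure_induction_left with
  | one => exact ⟨0, 0, 0, by group⟩
  | mul_left t ht g _ ih =>
    obtain ⟨a, b, c, rfl⟩ := ih
    rcases ht with rfl | rfl | rfl
    · exact ⟨a + 1, b, c, by group⟩
    · exact ⟨-a, b + 1, c, by rw [move_x hyx]; group⟩
    · exact ⟨-a + b % 2, b, c + 1, by rw [move_xy hzx hzy]; group⟩
  | inv_mul_cancel t ht g _ ih =>
    obtain ⟨a, b, c, rfl⟩ := ih
    rcases ht with rfl | rfl | rfl
    · exact ⟨a - 1, b, c, by group⟩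
    · exact ⟨-a, b - 1, c, by rw [move_x hyx.inv_left_of_inv]; group⟩
    · exact ⟨-a + b % 2, b, c - 1, by
        rw [move_xy hzx.inv_left_of_inv (hzx.inv_left_of_mul hzy)]; group⟩

end Relations

namespace DihedralGroup

theorem eq_one_of_commute_r_two_of_commute_sr_zero {d : DihedralGroup 0}
    (hr : Commute d (r 2)) (hsr : Commute d (sr 0)) : d = 1 := by
  cases d with
  | r i =>
    have hi : -i = i := by simpa [Commute, SemiconjBy] using hsr
    rw [self_eq_neg.mp hi.symm, r_zero]
  | sr i =>
    have hi : i + 2 = i - 2 := by simpa [Commute, SemiconjBy] using hr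
    rw [sub_eq_add_neg, add_right_inj] at hi
    exact absurd hi (by decide)

theorem eq_zero_and_even_of_r_two_zpow_mul_sr_one_zpow_mul_sr_zero_zpow_eq_one {a b c : ℤ}
    (h : (r 2 : DihedralGroup 0) ^ a * sr 1 ^ b * sr 0 ^ c = 1) : a = 0 ∧ Even b ∧ Even c := by
  rw [← zpow_mod_orderOf (sr 1), ← zpow_mod_orderOf (sr 0), orderOf_sr, orderOf_sr, r_zpow] at h
  rcases Int.emod_two_eq_zero_or_one b with hb | hb <;>
    rcases Int.emod_two_eq_zero_or_one c with hc | hc <;>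
    simp only [Nat.cast_ofNat, hb, hc, zpow_zero, zpow_one, one_def, r_mul_r, r_mul_sr, sr_mul_r,
      sr_mul_sr, add_zero, r.injEq, reduceCtorEq] at h
  · refine ⟨?_, Int.even_iff.mpr hb, Int.even_iff.mpr hc⟩
    have : 2 * a = 0 := by exact_mod_cast h
    omega
  · have : 0 - (1 - 2 * a) = 0 := by exact_mod_cast h
    omega

end DihedralGroup

namespace PolyZB1

open DihedralGroup Subgroup

abbrev G := PresentedGroup polyZRelsB1

abbrev g₁ : G := PresentedGroup.of 0
abbrev g₂ : G := PresentedGroup.of 1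
abbrev g₃ : G := PresentedGroup.of 2

theorem semiconjBy_g₂_g₁ : SemiconjBy g₂ g₁ g₁⁻¹ := by
  have h : g₂ * g₁ * g₂⁻¹ * g₁ = 1 := PresentedGroup.one_of_mem (Or.inl rfl)
  rwa [SemiconjBy, ← mul_inv_eq_iff_eq_mul, ← mul_eq_one_iff_eq_inv]

theorem semiconjBy_g₃_g₁ : SemiconjBy g₃ g₁ g₁⁻¹ := by
  have h : g₃ * g₁ * g₃⁻¹ * g₁ = 1 := PresentedGroup.one_of_mem (Or.inr (Or.inl rfl))
  rwa [SemiconjBy, ← mul_inv_eq_iff_eq_mul, ← mul_eq_one_iff_eq_inv]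

theorem semiconjBy_g₃_g₂ : SemiconjBy g₃ g₂ (g₁ * g₂) := by
  have h : g₃ * g₂ * g₃⁻¹ * g₂⁻¹ * g₁⁻¹ = 1 := PresentedGroup.one_of_mem (Or.inr (Or.inr rfl))
  rw [SemiconjBy, ← mul_inv_eq_one]
  simpa [mul_assoc] using h

theorem exists_normal_form (g : G) : ∃ a b c : ℤ, g = g₁ ^ a * g₂ ^ b * g₃ ^ c :=
  exists_zpow_mul_zpow_mul_zpow_of_mem_closure semiconjBy_g₂_g₁ semiconjBy_g₃_g₁ semiconjBy_g₃_g₂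
    (PresentedGroup.generated_by _ _ (fun j => by fin_cases j <;> exact subset_closure (by simp)) g)

theorem mem_center_of_commute_generators {g : G} (h₁ : Commute g g₁) (h₂ : Commute g g₂)
    (h₃ : Commute g g₃) : g ∈ center G := by
  rw [center_eq_iInf (PresentedGroup.closure_range_of _)]
  simp only [mem_iInf, Set.forall_mem_range, mem_centralizer_singleton_iff]
  intro j
  fin_cases j
  exacts [h₁.eq, h₂.eq, h₃.eq]

def toDihedralGroup : G →* DihedralGroup 0 :=
  PresentedGroup.toGroup (f := ![r 2, sr 1, sr 0])
    (by rintro _ (rfl | rfl | rfl) <;> simp [one_add_one_eq_two])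

theorem toDihedralGroup_zpow_mul_zpow_mul_zpow (a b c : ℤ) :
    toDihedralGroup (g₁ ^ a * g₂ ^ b * g₃ ^ c) = r 2 ^ a * sr 1 ^ b * sr 0 ^ c := by
  simp [toDihedralGroup]

theorem center_le_closure_sq : center G ≤ Subgroup.closure {g₂ ^ 2, g₃ ^ 2} := by
  intro g hg
  have hcomm (y : G) : Commute (toDihedralGroup g) (toDihedralGroup y) :=
    (show Commute g y from (mem_center_iff.mp hg y).symm).map toDihedralGroup
  have hg_ker : toDihedralGroup g = 1 :=
    eq_one_of_commute_r_two_of_commute_sr_zero (hcomm g₁) (hcomm g₃)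
  obtain ⟨a, b, c, rfl⟩ := exists_normal_form g
  rw [toDihedralGroup_zpow_mul_zpow_mul_zpow] at hg_ker
  obtain ⟨rfl, ⟨k, rfl⟩, ⟨m, rfl⟩⟩ :=
    eq_zero_and_even_of_r_two_zpow_mul_sr_one_zpow_mul_sr_zero_zpow_eq_one hg_ker
  rw [zpow_zero, one_mul, ← two_mul, ← two_mul, zpow_mul, zpow_mul]
  exact mul_mem (zpow_mem (subset_closure (by simp)) k) (zpow_mem (subset_closure (by simp)) m)

theorem closure_sq_le_center : Subgroup.closure {g₂ ^ 2, g₃ ^ 2} ≤ center G := by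
  rw [closure_le]
  rintro _ (rfl | rfl)
  · exact mem_center_of_commute_generators semiconjBy_g₂_g₁.commute_sq_of_inv
      ((Commute.refl g₂).pow_left 2)
      (semiconjBy_g₂_g₁.commute_sq_right_of_mul semiconjBy_g₃_g₂).symm
  · exact mem_center_of_commute_generators semiconjBy_g₃_g₁.commute_sq_of_inv
      (semiconjBy_g₃_g₁.commute_sq_of_mul semiconjBy_g₃_g₂) ((Commute.refl g₃).pow_left 2)

end PolyZB1

/-- Let `G = ⟨g₁, g₂, g₃ ∣ g₂g₁ = g₁⁻¹g₂, g₃g₁ = g₁⁻¹g₃, g₃g₂ = g₁g₂g₃⟩`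
(the group `G₂ ⋊_{β₁} ℤ`).  Then the center of `G` equals the subgroup
generated by `g₂²` and `g₃²`. -/
theorem polyZ_b1_center :
    Subgroup.center (PresentedGroup polyZRelsB1) =
      Subgroup.closure {(PresentedGroup.of 1 : PresentedGroup polyZRelsB1) ^ 2,
        (PresentedGroup.of 2 : PresentedGroup polyZRelsB1) ^ 2} :=
  le_antisymm PolyZB1.center_le_closure_sq PolyZB1.closure_sq_le_center
end

section
/- In the group G₃ = ⟨g₁, g₂, g₃ ∣ g₂g₁ = g₁^{-1}g₂, g₃g₁ = g₁^{-1}g₃, g₃g₂ = g₁g₂g₃⟩, for all integers a, b one has g₃^a · g₂^b = g₁^{μ(a)·μ(b)} · g₂^b · g₃^a, where μ(x) = 0 if x is even and μ(x) = 1 if x is odd. -/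
/-- `μ x = 0` if `x` is even and `μ x = 1` if `x` is odd. -/
def μ (x : ℤ) : ℤ := if Even x then 0 else 1

/-! Conjugation by `g₃` inverts `g₁` and maps `g₂ ^ b` to `(g₁ * g₂) ^ b`. Whenever `x` inverts `z`,
`(z * x) ^ 2 = x ^ 2`, which gives `(g₁ * g₂) ^ b = g₁ ^ μ b * g₂ ^ b`; if moreover
`x * y * x⁻¹ = z * y`, then `x ^ 2` centralizes `y`, so `x ^ a * y = z ^ μ a * y * x ^ a`.
In both cases an exponent `n` is split as `μ n + 2 * (n / 2)` and only its parity survives. -/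

lemma μ_eq_emod_two (x : ℤ) : μ x = x % 2 := by
  unfold μ
  split_ifs with h
  · exact (Int.even_iff.mp h).symm
  · exact (Int.not_even_iff.mp h).symm

lemma μ_eq_zero_or_one (x : ℤ) : μ x = 0 ∨ μ x = 1 := by
  unfold μ; split_ifs <;> simp

section

variable {G : Type*} [Group G]

lemma zpow_eq_zpow_μ_mul_sq_zpow (x : G) (n : ℤ) : x ^ n = x ^ μ n * (x ^ 2) ^ (n / 2) := by
  rw [← zpow_natCast, ← zpow_mul, ← zpow_add, μ_eq_emod_two, Nat.cast_ofNat,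
    Int.emod_add_mul_ediv]

lemma sq_mul_mul_inv_sq (x y : G) : x ^ 2 * y * (x ^ 2)⁻¹ = x * (x * y * x⁻¹) * x⁻¹ := by
  rw [sq]; group

variable {x z : G}

lemma mul_sq_of_mul_mul_inv_eq_inv (h : x * z * x⁻¹ = z⁻¹) : (z * x) ^ 2 = x ^ 2 := by
  calc (z * x) ^ 2 = z * (x * z * x⁻¹) * x ^ 2 := by rw [sq, sq]; group
    _ = x ^ 2 := by rw [h, mul_inv_cancel, one_mul]

lemma mul_zpow_of_mul_mul_inv_eq_inv (h : x * z * x⁻¹ = z⁻¹) (n : ℤ) :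
    (z * x) ^ n = z ^ μ n * x ^ n := by
  have hμ : (z * x) ^ μ n = z ^ μ n * x ^ μ n := by
    rcases μ_eq_zero_or_one n with h0 | h1
    · simp [h0]
    · simp [h1]
  rw [zpow_eq_zpow_μ_mul_sq_zpow (z * x), zpow_eq_zpow_μ_mul_sq_zpow x,
    mul_sq_of_mul_mul_inv_eq_inv h, hμ, mul_assoc]

lemma zpow_mul_eq_of_mul_mul_inv_eq {y : G} (hz : x * z * x⁻¹ = z⁻¹) (hy : x * y * x⁻¹ = z * y)
    (n : ℤ) : x ^ n * y = z ^ μ n * y * x ^ n := by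
  have hsq : Commute (x ^ 2) y := by
    rw [commute_iff_eq, ← mul_inv_eq_iff_eq_mul, sq_mul_mul_inv_sq]
    calc x * (x * y * x⁻¹) * x⁻¹ = x * (z * y) * x⁻¹ := by rw [hy]
      _ = (x * z * x⁻¹) * (x * y * x⁻¹) := by group
      _ = y := by rw [hz, hy, inv_mul_cancel_left]
  have hμ : x ^ μ n * y = z ^ μ n * y * x ^ μ n := by
    rcases μ_eq_zero_or_one n with h0 | h1
    · simp [h0]
    · simp [h1, ← hy]
  rw [zpow_eq_zpow_μ_mul_sq_zpow x, mul_assoc, (hsq.zpow_left _).eq, ← mul_assoc, hμ,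
    mul_assoc]

end

/-- In `G₃ = ⟨g₁, g₂, g₃ ∣ g₂g₁ = g₁⁻¹g₂, g₃g₁ = g₁⁻¹g₃, g₃g₂ = g₁g₂g₃⟩`,
for all integers `a, b`: `g₃^a * g₂^b = g₁^(μ(a)·μ(b)) * g₂^b * g₃^a`. -/
theorem polyZ_b1_swap (a b : ℤ) :
    letI G₃ := PresentedGroup polyZRelsB1
    letI g₁ : G₃ := PresentedGroup.of 0
    letI g₂ : G₃ := PresentedGroup.of 1
    letI g₃ : G₃ := PresentedGroup.of 2
    g₃ ^ a * g₂ ^ b = g₁ ^ (μ a * μ b) * g₂ ^ b * g₃ ^ a := by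
  set g₁ : PresentedGroup polyZRelsB1 := .of 0
  set g₂ : PresentedGroup polyZRelsB1 := .of 1
  set g₃ : PresentedGroup polyZRelsB1 := .of 2
  have h₂₁ : g₂ * g₁ * g₂⁻¹ = g₁⁻¹ :=
    mul_eq_one_iff_eq_inv.mp (PresentedGroup.one_of_mem (by simp [polyZRelsB1]))
  have h₃₁ : g₃ * g₁ * g₃⁻¹ = g₁⁻¹ :=
    mul_eq_one_iff_eq_inv.mp (PresentedGroup.one_of_mem (by simp [polyZRelsB1]))
  have h₃₂ : g₃ * g₂ * g₃⁻¹ = g₁ * g₂ := mul_inv_eq_iff_eq_mul.mp <|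
    mul_inv_eq_one.mp (PresentedGroup.one_of_mem (by simp [polyZRelsB1]))
  have hz : g₃ * g₁ ^ μ b * g₃⁻¹ = (g₁ ^ μ b)⁻¹ := by rw [← conj_zpow, h₃₁, inv_zpow]
  have hy : g₃ * g₂ ^ b * g₃⁻¹ = g₁ ^ μ b * g₂ ^ b := by
    rw [← conj_zpow, h₃₂, mul_zpow_of_mul_mul_inv_eq_inv h₂₁]
  rw [zpow_mul_eq_of_mul_mul_inv_eq hz hy, ← zpow_mul, mul_comm]
end
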